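/- arXiv:1506.06024 — 5 statements merged into one kernel-verified Lean document; each statement's English description precedes it below -/
import Mathlib

section
/- The collection ℕ⟨M⟩ of finite multisets over M, equipped with pointwise union ⊕, the multiset extension of Val, the Cauchy product ·, empty multiset ε and simple multiset [𝟙], forms a product valuation monoid: (ℕ⟨M⟩, ⊕, ε) is a commutative monoid, Val(r₁, …, rₙ) = ε whenever some rᵢ = ε, Val(r) = r, Val([𝟙], …, [𝟙]) = [𝟙], r · ε = ε · r = ε, and r · [𝟙] = [𝟙] · r = r. -/
/-- The finsupp over `List M` collecting, for each sequence `(m₁, …, mₙ)`, the product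
`Π rᵢ(mᵢ)` of multiplicities. -/
noncomputable def listProd {M : Type*} : List (M →₀ ℕ) → (List M →₀ ℕ)
  | [] => Finsupp.single [] 1
  | r :: rs => r.sum fun m k => (listProd rs).sum fun l j => Finsupp.single (m :: l) (k * j)

/-- The extension of a valuation function `Val : M⁺ → M` to finite multisets:
`Val(r₁, …, rₙ)(m) = Σ { Π rᵢ(mᵢ) | Val(m₁, …, mₙ) = m }`. -/
noncomputable def mval {M : Type*} (Val : List M → M) (rs : List (M →₀ ℕ)) : M →₀ ℕ :=
  (listProd rs).mapDomain Val

/-- The Cauchy product of finite multisets over `(M, ⋄)`. -/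
noncomputable def cprod {M : Type*} (d : M → M → M) (r₁ r₂ : M →₀ ℕ) : M →₀ ℕ :=
  r₁.sum fun m₁ k₁ => r₂.sum fun m₂ k₂ => Finsupp.single (d m₁ m₂) (k₁ * k₂)

lemma listProd_zero_mem {M : Type*} (rs : List (M →₀ ℕ)) (h : (0 : M →₀ ℕ) ∈ rs) :
    listProd rs = 0 := by
  induction rs with
  | nil => simp at h
  | cons r rs ih =>
    rcases List.mem_cons.mp h with h | h
    · subst h; simp [listProd]
    · simp [listProd, ih h]

lemma listProd_replicate {M : Type*} (one : M) (n : ℕ) :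
    listProd (List.replicate n (Finsupp.single one 1)) = Finsupp.single (List.replicate n one) 1 := by
  induction n with
  | zero => simp [listProd]
  | succ n ih =>
    rw [List.replicate_succ]
    simp only [listProd, ih]
    rw [Finsupp.sum_single_index, Finsupp.sum_single_index] <;> simp [List.replicate_succ]

lemma listProd_singleton {M : Type*} (r : M →₀ ℕ) :
    listProd [r] = r.sum fun m k => Finsupp.single [m] k := by
  simp only [listProd]
  refine Finsupp.sum_congr fun m _ => ?_
  rw [Finsupp.sum_single_index] <;> simp

/-- `ℕ⟨M⟩`, the finite multisets over `M` with pointwise union (addition), the multiset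
extension of `Val`, the Cauchy product, empty multiset `ε = 0` and simple multiset `[𝟙]`,
forms a product valuation monoid. -/
theorem finite_multisets_pv_monoid {M : Type*} (Val : List M → M) (d : M → M → M) (one : M)
    (hVal₁ : ∀ m : M, Val [m] = m)
    (hValOne : ∀ (m : M) (n : ℕ), Val (m :: List.replicate n one) = m)
    (hdr : ∀ m : M, d m one = m) (hdl : ∀ m : M, d one m = m) :
    -- (ℕ⟨M⟩, ⊕, ε) is a commutative monoid
    (∀ r₁ r₂ : M →₀ ℕ, r₁ + r₂ = r₂ + r₁) ∧
    (∀ r₁ r₂ r₃ : M →₀ ℕ, r₁ + r₂ + r₃ = r₁ + (r₂ + r₃)) ∧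
    (∀ r : M →₀ ℕ, r + 0 = r) ∧ (∀ r : M →₀ ℕ, 0 + r = r) ∧
    -- Val(r₁, …, rₙ) = ε whenever some rᵢ = ε
    (∀ rs : List (M →₀ ℕ), rs ≠ [] → (0 : M →₀ ℕ) ∈ rs → mval Val rs = 0) ∧
    -- Val(r) = r
    (∀ r : M →₀ ℕ, mval Val [r] = r) ∧
    -- Val([𝟙], …, [𝟙]) = [𝟙]
    (∀ n : ℕ, 1 ≤ n →
      mval Val (List.replicate n (Finsupp.single one 1)) = Finsupp.single one 1) ∧
    -- r · ε = ε · r = ε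
    (∀ r : M →₀ ℕ, cprod d r 0 = 0 ∧ cprod d 0 r = 0) ∧
    -- r · [𝟙] = [𝟙] · r = r
    (∀ r : M →₀ ℕ, cprod d r (Finsupp.single one 1) = r ∧
      cprod d (Finsupp.single one 1) r = r) := by
  refine ⟨fun r₁ r₂ => add_comm _ _, fun r₁ r₂ r₃ => add_assoc _ _ _,
    fun r => add_zero r, fun r => zero_add r, ?_, ?_, ?_, ?_, ?_⟩
  · intro rs _ h
    simp [mval, listProd_zero_mem rs h]
  · intro r
    rw [mval, listProd_singleton, Finsupp.mapDomain, Finsupp.sum_sum_index] <;> simp [hVal₁]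
  · intro n hn
    obtain ⟨m, rfl⟩ := Nat.exists_eq_add_of_le' hn
    rw [mval, listProd_replicate, Finsupp.mapDomain_single, List.replicate_succ,
      hValOne one m]
  · intro r
    constructor
    · simp [cprod]
    · simp [cprod, Finsupp.sum_zero_index]
  · intro r
    constructor
    · rw [cprod]
      conv_rhs => rw [← r.sum_single]
      refine Finsupp.sum_congr fun m _ => ?_
      rw [Finsupp.sum_single_index] <;> simp [hdr]
    · rw [cprod, Finsupp.sum_single_index]
      · conv_rhs => rw [← r.sum_single]
        refine Finsupp.sum_congr fun m _ => ?_
        simp [hdl]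
      · simp [Finsupp.sum_zero_index]
end

section
/- Suppose (M, Val, ⋄) is left-multiplicative, i.e., m ⋄ Val(m₁, m₂, …, mₙ) = Val(m ⋄ m₁, m₂, …, mₙ) for all n ≥ 1 and all elements. Then the extensions of ⋄ (Cauchy product) and Val to finite multisets over M are left-multiplicative: r · Val(r₁, r₂, …, rₙ) = Val(r · r₁, r₂, …, rₙ). -/
/-- Summing an additive function over a "double sum of singles" finsupp. -/
lemma sum_sum_single_sum {α β γ N : Type*} [AddCommMonoid N]
    (f : α →₀ ℕ) (g : β →₀ ℕ) (p : α → β → γ) (h : γ → ℕ → N)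
    (h0 : ∀ a, h a 0 = 0) (hadd : ∀ a b₁ b₂, h a (b₁ + b₂) = h a b₁ + h a b₂) :
    (f.sum fun m k => g.sum fun m' k' => Finsupp.single (p m m') (k * k')).sum h
      = f.sum fun m k => g.sum fun m' k' => h (p m m') (k * k') := by
  rw [Finsupp.sum_sum_index h0 hadd]
  refine Finsupp.sum_congr fun m _ => ?_
  rw [Finsupp.sum_sum_index h0 hadd]
  refine Finsupp.sum_congr fun m' _ => ?_
  rw [Finsupp.sum_single_index (h0 _)]

lemma mval_cons {M : Type*} (Val : List M → M) (x : M →₀ ℕ) (rs : List (M →₀ ℕ)) :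
    mval Val (x :: rs) = x.sum fun a n => (listProd rs).sum fun l j =>
      Finsupp.single (Val (a :: l)) (n * j) := by
  rw [mval, Finsupp.mapDomain]
  exact sum_sum_single_sum x (listProd rs) (fun a l => a :: l)
    (fun a n => Finsupp.single (Val a) n) (by simp) (by simp [Finsupp.single_add])

/-- If `(M, Val, ⋄)` is left-multiplicative, i.e.
`m ⋄ Val(m₁, m₂, …, mₙ) = Val(m ⋄ m₁, m₂, …, mₙ)`, then the Cauchy product and the
multiset extension of `Val` on finite multisets are left-multiplicative as well. -/
theorem mval_left_multiplicative {M : Type*} (Val : List M → M) (d : M → M → M)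
    (hlm : ∀ (m m₁ : M) (ms : List M), d m (Val (m₁ :: ms)) = Val (d m m₁ :: ms)) :
    ∀ (r r₁ : M →₀ ℕ) (rs : List (M →₀ ℕ)),
      cprod d r (mval Val (r₁ :: rs)) = mval Val (cprod d r r₁ :: rs) := by
  intro r r₁ rs
  rw [mval_cons, mval_cons, cprod]
  rw [Finsupp.sum_congr (g2 := fun m k => r₁.sum fun m₁ k₁ => (listProd rs).sum fun l j =>
    Finsupp.single (d m (Val (m₁ :: l))) (k * (k₁ * j))) (fun m _ =>
      sum_sum_single_sum r₁ (listProd rs) (fun a l => Val (a :: l))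
        (fun b t => Finsupp.single (d m b) ((r m) * t)) (by simp)
        (by simp [mul_add, Finsupp.single_add]))]
  rw [cprod, sum_sum_single_sum r r₁ d
    (fun a n => (listProd rs).sum fun l j => Finsupp.single (Val (a :: l)) (n * j))
    (by simp)
    (fun a b₁ b₂ => by
      rw [← Finsupp.sum_add]
      exact Finsupp.sum_congr fun l _ => by rw [add_mul, Finsupp.single_add])]
  refine Finsupp.sum_congr fun m _ => Finsupp.sum_congr fun m₁ _ =>
    Finsupp.sum_congr fun l _ => ?_
  rw [hlm, mul_assoc]
end

section
/- Suppose (M, Val, ⋄) is Val-commutative, i.e., Val(m₁, …, mₙ) ⋄ Val(m₁', …, mₙ') = Val(m₁ ⋄ m₁', …, mₙ ⋄ mₙ') for all equal-length sequences. Then the multiset extensions satisfy Val(r₁, …, rₙ) · Val(r₁', …, rₙ') = Val(r₁ · r₁', …, rₙ · rₙ') for all finite multisets r₁, …, rₙ, r₁', …, rₙ' over M. -/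
private lemma sum_single_sum {α β γ : Type*} [AddCommMonoid γ] (p : α →₀ ℕ) (f : α → β)
    (h : β → ℕ → γ) (h0 : ∀ b, h b 0 = 0)
    (hadd : ∀ b k₁ k₂, h b (k₁ + k₂) = h b k₁ + h b k₂) :
    (p.sum fun a k => Finsupp.single (f a) k).sum h = p.sum fun a k => h (f a) k := by
  rw [Finsupp.sum_sum_index h0 hadd]
  exact Finsupp.sum_congr fun a _ => Finsupp.sum_single_index (h0 _)

private lemma sum_singles_sum {α β γ δ : Type*} [AddCommMonoid δ] (p : α →₀ ℕ) (q : β →₀ ℕ)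
    (f : α → β → γ) (h : γ → ℕ → δ) (h0 : ∀ c, h c 0 = 0)
    (hadd : ∀ c k₁ k₂, h c (k₁ + k₂) = h c k₁ + h c k₂) :
    (p.sum fun a k => q.sum fun b j => Finsupp.single (f a b) (k * j)).sum h
      = p.sum fun a k => q.sum fun b j => h (f a b) (k * j) := by
  rw [Finsupp.sum_sum_index h0 hadd]
  refine Finsupp.sum_congr fun a _ => ?_
  rw [Finsupp.sum_sum_index h0 hadd]
  exact Finsupp.sum_congr fun b _ => Finsupp.sum_single_index (h0 _)

private lemma mem_support_listProd {M : Type*} : ∀ (rs : List (M →₀ ℕ)) (l : List M),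
    l ∈ (listProd rs).support → l.length = rs.length := by
  intro rs
  induction rs with
  | nil =>
    intro l hl
    simp only [listProd] at hl
    have := Finsupp.support_single_subset hl
    simp only [Finset.mem_singleton] at this
    simp [this]
  | cons r rs ih =>
    intro l hl
    classical
    simp only [listProd] at hl
    have h1 := Finsupp.support_sum hl
    obtain ⟨m, hm, h2⟩ := Finset.mem_biUnion.mp h1
    have h3 := Finsupp.support_sum h2
    obtain ⟨l₀, hl₀, h4⟩ := Finset.mem_biUnion.mp h3
    have h5 := Finsupp.support_single_subset h4
    simp only [Finset.mem_singleton] at h5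
    subst h5
    simp [ih l₀ hl₀]

private lemma listProd_zipWith {M : Type*} (d : M → M → M) :
    ∀ rs rs' : List (M →₀ ℕ), rs.length = rs'.length →
      listProd (List.zipWith (cprod d) rs rs')
        = cprod (fun l l' => List.zipWith d l l') (listProd rs) (listProd rs') := by
  intro rs
  induction rs with
  | nil =>
    intro rs' h
    cases rs' with
    | nil =>
      show listProd (List.zipWith (cprod d) [] []) = _
      rw [show List.zipWith (cprod d) ([] : List (M →₀ ℕ)) [] = [] from rfl]
      rw [show listProd ([] : List (M →₀ ℕ)) = Finsupp.single ([] : List M) 1 from rfl]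
      rw [show cprod (fun l l' => List.zipWith d l l') (Finsupp.single ([] : List M) 1)
            (Finsupp.single ([] : List M) 1)
          = (Finsupp.single ([] : List M) 1).sum fun m k =>
              (Finsupp.single ([] : List M) 1).sum fun m' k' =>
                Finsupp.single (List.zipWith d m m') (k * k') from rfl]
      rw [Finsupp.sum_single_index (by simp), Finsupp.sum_single_index (by simp)]
      simp
    | cons r' rs' => simp at h
  | cons r rs ih =>
    intro rs' h
    cases rs' with
    | nil => simp at h
    | cons r' rs' =>
      simp only [List.length_cons, add_left_inj] at h
      simp only [List.zipWith_cons_cons, listProd]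
      rw [ih rs' h]
      set P := listProd rs with hP
      set P' := listProd rs' with hP'
      -- transform LHS
      have hL : ((cprod d r r').sum fun m k =>
            (cprod (fun l l' => List.zipWith d l l') P P').sum fun l j =>
              Finsupp.single (m :: l) (k * j))
          = r.sum fun m₁ k₁ => P.sum fun l j => r'.sum fun m₂ k₂ => P'.sum fun l' j' =>
              Finsupp.single (d m₁ m₂ :: List.zipWith d l l') ((k₁ * j) * (k₂ * j')) := by
        rw [show cprod d r r'
            = r.sum fun m₁ k₁ => r'.sum fun m₂ k₂ => Finsupp.single (d m₁ m₂) (k₁ * k₂) from rfl]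
        rw [sum_singles_sum r r' d _
          (by intro c; simp)
          (by intro c k₁ k₂; simp [add_mul, Finsupp.single_add, Finsupp.sum_add])]
        trans (r.sum fun m₁ k₁ => r'.sum fun m₂ k₂ => P.sum fun l j => P'.sum fun l' j' =>
          Finsupp.single (d m₁ m₂ :: List.zipWith d l l') ((k₁ * k₂) * (j * j')))
        · refine Finsupp.sum_congr fun m₁ _ => Finsupp.sum_congr fun m₂ _ => ?_
          exact sum_singles_sum P P' (fun l l' => List.zipWith d l l') _
            (by intro c; simp)
            (by intro c k₁ k₂; simp [mul_add, Finsupp.single_add])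
        refine Finsupp.sum_congr fun m₁ _ => ?_
        rw [Finsupp.sum_comm]
        refine Finsupp.sum_congr fun l _ => Finsupp.sum_congr fun m₂ _ =>
          Finsupp.sum_congr fun l' _ => ?_
        congr 1
        ring
      rw [hL]
      -- transform RHS
      rw [show cprod (fun l l' => List.zipWith d l l')
            (r.sum fun m k => P.sum fun l j => Finsupp.single (m :: l) (k * j))
            (r'.sum fun m k => P'.sum fun l j => Finsupp.single (m :: l) (k * j))
          = (r.sum fun m k => P.sum fun l j => Finsupp.single (m :: l) (k * j)).sum fun x kx =>
              (r'.sum fun m k => P'.sum fun l j => Finsupp.single (m :: l) (k * j)).sum fun y ky =>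
                Finsupp.single (List.zipWith d x y) (kx * ky) from rfl]
      rw [sum_singles_sum r P (fun m l => m :: l) _
        (by intro c; simp)
        (by intro c k₁ k₂; simp [add_mul, Finsupp.single_add, Finsupp.sum_add])]
      refine Finsupp.sum_congr fun m₁ _ => Finsupp.sum_congr fun l _ => ?_
      rw [sum_singles_sum r' P' (fun m l => m :: l)
        (fun y ky => Finsupp.single (List.zipWith d (m₁ :: l) y) (_ * ky))
        (by intro c; simp)
        (by intro c k₁ k₂; simp [mul_add, Finsupp.single_add])]
      refine Finsupp.sum_congr fun m₂ _ => Finsupp.sum_congr fun l' _ => ?_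
      simp only [List.zipWith_cons_cons]

/-- If `(M, Val, ⋄)` is Val-commutative, i.e.
`Val(m₁, …, mₙ) ⋄ Val(m₁', …, mₙ') = Val(m₁ ⋄ m₁', …, mₙ ⋄ mₙ')` for equal-length
nonempty sequences, then the multiset extensions satisfy
`Val(r₁, …, rₙ) · Val(r₁', …, rₙ') = Val(r₁ · r₁', …, rₙ · rₙ')`. -/
theorem mval_val_commutative {M : Type*} (Val : List M → M) (d : M → M → M)
    (hvc : ∀ ms ms' : List M, ms ≠ [] → ms.length = ms'.length →
      d (Val ms) (Val ms') = Val (List.zipWith d ms ms')) :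
    ∀ rs rs' : List (M →₀ ℕ), rs ≠ [] → rs.length = rs'.length →
      cprod d (mval Val rs) (mval Val rs') = mval Val (List.zipWith (cprod d) rs rs') := by
  intro rs rs' hne hlen
  unfold mval
  rw [listProd_zipWith d rs rs' hlen]
  set P := listProd rs with hPdef
  set P' := listProd rs' with hP'def
  rw [show Finsupp.mapDomain Val P = P.sum fun a k => Finsupp.single (Val a) k from rfl]
  rw [show Finsupp.mapDomain Val P' = P'.sum fun a k => Finsupp.single (Val a) k from rfl]
  rw [show cprod d (P.sum fun a k => Finsupp.single (Val a) k)
        (P'.sum fun a k => Finsupp.single (Val a) k)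
      = (P.sum fun a k => Finsupp.single (Val a) k).sum fun m k =>
          (P'.sum fun a k => Finsupp.single (Val a) k).sum fun m' k' =>
            Finsupp.single (d m m') (k * k') from rfl]
  rw [sum_single_sum P Val _
    (by intro b; simp)
    (by intro b k₁ k₂; simp [add_mul, Finsupp.single_add, Finsupp.sum_add])]
  rw [show Finsupp.mapDomain Val (cprod (fun l l' => List.zipWith d l l') P P')
      = (P.sum fun l k => P'.sum fun l' k' =>
          Finsupp.single (List.zipWith d l l') (k * k')).sum fun a j =>
            Finsupp.single (Val a) j from rfl]
  rw [sum_singles_sum P P' (fun l l' => List.zipWith d l l')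
    (fun a j => Finsupp.single (Val a) j)
    (by intro c; simp)
    (by intro c k₁ k₂; simp [Finsupp.single_add])]
  refine Finsupp.sum_congr fun l hl => ?_
  rw [sum_single_sum P' Val (fun b k' => Finsupp.single (d (Val l) b) (_ * k'))
    (by intro b; simp)
    (by intro b k₁ k₂; simp [mul_add, Finsupp.single_add])]
  refine Finsupp.sum_congr fun l' hl' => ?_
  have h1 := mem_support_listProd rs l hl
  have h2 := mem_support_listProd rs' l' hl'
  have hlne : l ≠ [] := by
    intro hc
    subst hc
    exact hne (List.eq_nil_of_length_eq_zero h1.symm)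
  rw [hvc l l' hlne (by rw [h1, h2, hlen])]
end

section
/- Let 𝒜 = (Q, I, T, F, γ) be a weighted automaton over Σ with weights γ(t) ∈ ℕ⟨M⟩ (finite multisets over M). Define 𝒜′ by unfolding: states Q′ = I ∪ {(q, m, i) | (p,a,q) ∈ T, m ∈ supp(γ(p,a,q)), 1 ≤ i ≤ γ(p,a,q)(m)}, with transitions into (q,m,i) labeled by the simple multiset [m] and coming from states whose underlying state has a matching transition, initial states I, and final states {(q,m,i) | q ∈ F}. Then for every word w ∈ Σ⁺, the behaviors agree: ⊕_{π ∈ Acc_{𝒜′}(w)} Val(weights of π) = ⊕_{π ∈ Acc_𝒜(w)} Val(weights of π), computed in the pv-monoid of finite multisets. -/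
/-- Accepting paths of a nondeterministic automaton `(Q, I, T, F)` on a finite word
`w = a₀ ⋯ aₙ`, represented as state sequences `qs : Fin (|w|+1) → Q` starting in `I`,
ending in `F`, and following transitions in `T`. -/
def accSet {Q A : Type*} (I F : Set Q) (T : Set (Q × A × Q)) (w : List A) :
    Set (Fin (w.length + 1) → Q) :=
  {qs | qs 0 ∈ I ∧ qs (Fin.last w.length) ∈ F ∧
    ∀ i : Fin w.length, (qs i.castSucc, w.get i, qs i.succ) ∈ T}

/-- The behavior of a weighted automaton over the pv-monoid of finite multisets:
the multiset union (sum) over all accepting paths of the multiset valuation of the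
sequence of transition weights. -/
noncomputable def wBehavior {Q A M : Type*} (Val : List M → M) (I F : Set Q)
    (T : Set (Q × A × Q)) (γ : Q × A × Q → (M →₀ ℕ)) (w : List A) : M →₀ ℕ :=
  ∑ᶠ qs ∈ accSet I F T w,
    mval Val (List.ofFn fun i : Fin w.length => γ (qs i.castSucc, w.get i, qs i.succ))

/-- The underlying `Q`-state of a state of the unfolded automaton. -/
def und {Q M : Type*} : Q ⊕ (Q × M × ℕ) → Q := Sum.elim id fun x => x.1

/-- Initial states of the unfolded automaton: `I` (embedded on the left). -/
def unfI {Q M : Type*} (I : Set Q) : Set (Q ⊕ (Q × M × ℕ)) := Sum.inl '' I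

/-- Final states of the unfolded automaton: `{(q, m, i) | q ∈ F}`. -/
def unfF {Q M : Type*} (F : Set Q) : Set (Q ⊕ (Q × M × ℕ)) :=
  {x | ∃ q m i, x = Sum.inr (q, m, i) ∧ q ∈ F}

/-- Transitions of the unfolded automaton: a transition into `(q, m, i)` labelled `a`
from a state with underlying state `p` exists iff `(p, a, q) ∈ T`,
`m ∈ supp(γ(p, a, q))` and `1 ≤ i ≤ γ(p, a, q)(m)`. -/
def unfT {Q A M : Type*} (T : Set (Q × A × Q)) (γ : Q × A × Q → (M →₀ ℕ)) :
    Set ((Q ⊕ (Q × M × ℕ)) × A × (Q ⊕ (Q × M × ℕ))) :=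
  {t | ∃ x a q m i, t = (x, a, Sum.inr (q, m, i)) ∧ (und x, a, q) ∈ T ∧
    m ∈ (γ (und x, a, q)).support ∧ 1 ≤ i ∧ i ≤ γ (und x, a, q) m}

/-- Weights of the unfolded automaton: a transition into `(q, m, i)` carries the simple
multiset `[m]`. -/
noncomputable def unfγ {Q A M : Type*} :
    ((Q ⊕ (Q × M × ℕ)) × A × (Q ⊕ (Q × M × ℕ))) → (M →₀ ℕ) :=
  fun t => match t.2.2 with
    | Sum.inr (_, m, _) => Finsupp.single m 1
    | Sum.inl _ => 0

/-! ### Auxiliary material -/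

section Counting

variable {M : Type*}

open Classical in
/-- The finite set of admissible pairs `(m, i)` for a single multiset weight `r`. -/
noncomputable def Dset (r : M →₀ ℕ) : Finset (M × ℕ) :=
  r.support.biUnion fun m => (Finset.Icc 1 (r m)).image fun j => (m, j)

lemma mem_Dset {r : M →₀ ℕ} {p : M × ℕ} :
    p ∈ Dset r ↔ p.1 ∈ r.support ∧ 1 ≤ p.2 ∧ p.2 ≤ r p.1 := by
  obtain ⟨m, j⟩ := p
  simp only [Dset, Finset.mem_biUnion, Finset.mem_image, Finset.mem_Icc, Prod.mk.injEq]
  constructor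
  · rintro ⟨m', hm', j', ⟨h1, h2⟩, rfl, rfl⟩; exact ⟨hm', h1, h2⟩
  · rintro ⟨hm, h1, h2⟩; exact ⟨m, hm, j, ⟨h1, h2⟩, rfl, rfl⟩

open Classical in
/-- Admissible sequences of pairs `(mᵢ, iᵢ)` for a sequence of multiset weights. -/
noncomputable def choices : List (M →₀ ℕ) → Finset (List (M × ℕ))
  | [] => {[]}
  | r :: rs => (Dset r ×ˢ choices rs).image fun p => p.1 :: p.2

lemma sum_Dset {β : Type*} [AddCommMonoid β] (r : M →₀ ℕ) (G : M → β) :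
    ∑ p ∈ Dset r, G p.1 = r.sum fun m k => k • G m := by
  classical
  rw [Dset, Finset.sum_biUnion]
  · refine Finset.sum_congr rfl fun m hm => ?_
    rw [Finset.sum_image (by intro a _ b _ h; simpa using h)]
    simp [Finset.sum_const, Nat.card_Icc]
  · intro a ha b hb hab
    simp only [Function.onFun, Finset.disjoint_left, Finset.mem_image, Finset.mem_Icc]
    rintro p ⟨j, _, rfl⟩ ⟨j', _, h⟩
    exact hab (congrArg Prod.fst h).symm

lemma mapDomain_finsupp_sum {α β ι N P : Type*} [Zero N] [AddCommMonoid P] (f : α → β)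
    (s : ι →₀ N) (v : ι → N → α →₀ P) :
    Finsupp.mapDomain f (s.sum v) = s.sum fun a b => Finsupp.mapDomain f (v a b) :=
  map_finsuppSum (Finsupp.mapDomain.addMonoidHom f) _ _

/-- The key counting identity: the multiset valuation of a sequence of weights is the sum,
over all admissible choice sequences, of the simple multiset on the value of the
chosen `m`-sequence. -/
lemma mapDomain_listProd (rs : List (M →₀ ℕ)) (V : List M → M) :
    Finsupp.mapDomain V (listProd rs) =
      ∑ c ∈ choices rs, Finsupp.single (V (c.map Prod.fst)) 1 := by
  classical
  induction rs generalizing V with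
  | nil => simp [listProd, choices, Finsupp.mapDomain_single]
  | cons r rs ih =>
    rw [listProd, mapDomain_finsupp_sum]
    have step : ∀ m : M, ∀ k : ℕ,
        Finsupp.mapDomain V ((listProd rs).sum fun l j => Finsupp.single (m :: l) (k * j)) =
          k • ∑ c ∈ choices rs, Finsupp.single (V (m :: c.map Prod.fst)) 1 := by
      intro m k
      rw [mapDomain_finsupp_sum, ← ih (fun l => V (m :: l))]
      rw [Finsupp.mapDomain, Finsupp.smul_sum]
      refine Finsupp.sum_congr fun l hl => ?_
      rw [Finsupp.mapDomain_single, Finsupp.smul_single, smul_eq_mul]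
    calc (r.sum fun m k =>
          Finsupp.mapDomain V ((listProd rs).sum fun l j => Finsupp.single (m :: l) (k * j)))
        = r.sum fun m k => k • ∑ c ∈ choices rs, Finsupp.single (V (m :: c.map Prod.fst)) 1 :=
          Finsupp.sum_congr fun m _ => step m (r m)
      _ = ∑ c ∈ choices (r :: rs), Finsupp.single (V (c.map Prod.fst)) 1 := by
          rw [choices, Finset.sum_image (by rintro ⟨a,b⟩ _ ⟨c,d⟩ _ h; simpa [Prod.ext_iff] using h),
            Finset.sum_product, ← sum_Dset r
              (fun m => ∑ c ∈ choices rs, Finsupp.single (V (m :: c.map Prod.fst)) 1)]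
          rfl

lemma mem_choices_ofFn {n : ℕ} (r : Fin n → (M →₀ ℕ)) (c : List (M × ℕ)) :
    c ∈ choices (List.ofFn r) ↔
      ∃ d : Fin n → M × ℕ, c = List.ofFn d ∧ ∀ i, d i ∈ Dset (r i) := by
  induction n generalizing c with
  | zero =>
    simp only [List.ofFn_zero, choices, Finset.mem_singleton]
    constructor
    · rintro rfl; exact ⟨Fin.elim0, rfl, fun i => i.elim0⟩
    · rintro ⟨d, rfl, -⟩; rfl
  | succ n ih =>
    rw [List.ofFn_succ, choices]
    simp only [Finset.mem_image, Finset.mem_product]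
    constructor
    · rintro ⟨⟨p, c'⟩, ⟨hp, hc'⟩, rfl⟩
      obtain ⟨d', rfl, hd'⟩ := (ih _ _).1 hc'
      refine ⟨Fin.cons p d', ?_, fun i => ?_⟩
      · rw [List.ofFn_succ]; simp [Fin.cons_zero, Fin.cons_succ]
      · induction i using Fin.cases with
        | zero => simpa [Fin.cons_zero] using hp
        | succ j => simpa [Fin.cons_succ] using hd' j
    · rintro ⟨d, rfl, hd⟩
      refine ⟨(d 0, List.ofFn fun i => d i.succ),
        ⟨hd 0, (ih _ _).2 ⟨_, rfl, fun i => hd i.succ⟩⟩, ?_⟩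
      rw [List.ofFn_succ]

lemma listProd_singles (ms : List M) :
    listProd (ms.map fun m => Finsupp.single m 1) = Finsupp.single ms 1 := by
  induction ms with
  | nil => rfl
  | cons m ms ih =>
    rw [List.map_cons, listProd, ih]
    rw [Finsupp.sum_single_index, Finsupp.sum_single_index] <;> simp

lemma mval_singles (Val : List M → M) {n : ℕ} (m : Fin n → M) :
    mval Val (List.ofFn fun i => Finsupp.single (m i) 1) =
      Finsupp.single (Val (List.ofFn m)) 1 := by
  have h : (List.ofFn fun i => Finsupp.single (m i) 1) =
      (List.ofFn m).map (fun m => Finsupp.single m 1) := by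
    rw [List.map_ofFn]; rfl
  rw [mval, h, listProd_singles, Finsupp.mapDomain_single]

end Counting

section Automaton

variable {Q A M : Type*}

/-- Lift a path `qs` of the original automaton along a choice function `d`. -/
def liftp {n : ℕ} (qs : Fin (n + 1) → Q) (d : Fin n → M × ℕ) :
    Fin (n + 1) → Q ⊕ (Q × M × ℕ) :=
  Fin.cases (Sum.inl (qs 0)) (fun i => Sum.inr (qs i.succ, d i))

@[simp] lemma liftp_zero {n : ℕ} (qs : Fin (n + 1) → Q) (d : Fin n → M × ℕ) :
    liftp qs d 0 = Sum.inl (qs 0) := rfl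

@[simp] lemma liftp_succ {n : ℕ} (qs : Fin (n + 1) → Q) (d : Fin n → M × ℕ) (i : Fin n) :
    liftp qs d i.succ = Sum.inr (qs i.succ, d i) := by simp [liftp]

lemma und_liftp {n : ℕ} (qs : Fin (n + 1) → Q) (d : Fin n → M × ℕ) (j : Fin (n + 1)) :
    und (liftp qs d j) = qs j := by
  induction j using Fin.cases <;> simp [liftp, und]

variable (I F : Set Q) (T : Set (Q × A × Q)) (γ : Q × A × Q → (M →₀ ℕ)) {w : List A}

lemma exists_succ_last (hw : w ≠ []) : ∃ i : Fin w.length, i.succ = Fin.last w.length := by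
  have hn : w.length ≠ 0 := by simpa [List.length_eq_zero_iff] using hw
  exact ⟨⟨w.length - 1, by omega⟩, by ext; simp [Fin.succ, Fin.last]; omega⟩

/-- Characterisation of the fiber of unfolded accepting paths over an original path. -/
lemma mem_fiber_iff (hw : w ≠ []) {qs : Fin (w.length + 1) → Q}
    (hqs : qs ∈ accSet I F T w) (qs' : Fin (w.length + 1) → Q ⊕ (Q × M × ℕ)) :
    (qs' ∈ accSet (unfI I) (unfF F) (unfT T γ) w ∧ und ∘ qs' = qs) ↔
      ∃ d : Fin w.length → M × ℕ,
        (∀ i, d i ∈ Dset (γ (qs i.castSucc, w.get i, qs i.succ))) ∧ qs' = liftp qs d := by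
  obtain ⟨hI, hF, hT⟩ := hqs
  constructor
  · rintro ⟨⟨h0, hlast, htr⟩, hund⟩
    have hu : ∀ j, und (qs' j) = qs j := fun j => congrFun hund j
    choose x a q m jj heq hT' hm h1 h2 using htr
    have hx : ∀ i : Fin w.length, qs' i.castSucc = x i := fun i => congrArg Prod.fst (heq i)
    have hsucc : ∀ i : Fin w.length, qs' i.succ = Sum.inr (q i, m i, jj i) := fun i =>
      congrArg (fun t => t.2.2) (heq i)
    have hq : ∀ i : Fin w.length, q i = qs i.succ := fun i => by
      have := hu i.succ; rw [hsucc i] at this; simpa [und] using this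
    have hundx : ∀ i : Fin w.length, und (x i) = qs i.castSucc := fun i => by
      rw [← hx i]; exact hu i.castSucc
    refine ⟨fun i => (m i, jj i), fun i => ?_, funext fun j => ?_⟩
    · rw [mem_Dset]
      have h3 := hm i; have h4 := h1 i; have h5 := h2 i
      rw [hundx i, hq i] at h3 h5
      have ha : a i = w.get i := (congrArg (fun t => t.2.1) (heq i)).symm
      rw [ha] at h3 h5
      exact ⟨h3, h4, h5⟩
    · induction j using Fin.cases with
      | zero =>
        obtain ⟨p, hp, hp'⟩ := h0
        have : p = qs 0 := by rw [← hu 0, ← hp']; rfl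
        rw [liftp_zero, ← hp', this]
      | succ i =>
        rw [liftp_succ, hsucc i, hq i]
  · rintro ⟨d, hd, rfl⟩
    refine ⟨⟨⟨qs 0, hI, rfl⟩, ?_, fun i => ?_⟩, funext fun j => und_liftp qs d j⟩
    · obtain ⟨i, hi⟩ := exists_succ_last (w := w) hw
      rw [← hi, liftp_succ]
      exact ⟨qs i.succ, (d i).1, (d i).2, rfl, by rwa [hi]⟩
    · obtain ⟨hm, h1, h2⟩ := mem_Dset.1 (hd i)
      refine ⟨liftp qs d i.castSucc, w.get i, qs i.succ, (d i).1, (d i).2,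
        by rw [liftp_succ], ?_⟩
      rw [und_liftp]
      exact ⟨hT i, hm, h1, h2⟩

lemma proj_acc {qs' : Fin (w.length + 1) → Q ⊕ (Q × M × ℕ)}
    (h : qs' ∈ accSet (unfI I) (unfF F) (unfT T γ) w) : und ∘ qs' ∈ accSet I F T w := by
  obtain ⟨h0, hlast, htr⟩ := h
  refine ⟨?_, ?_, fun i => ?_⟩
  · obtain ⟨p, hp, hp'⟩ := h0
    simpa [Function.comp, ← hp', und] using hp
  · obtain ⟨qq, mm, ii, heq, hqq⟩ := hlast
    simpa [Function.comp, heq, und] using hqq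
  · obtain ⟨x, a, qq, mm, ii, heq, hT', -, -, -⟩ := htr i
    have hx : qs' i.castSucc = x := congrArg Prod.fst heq
    have ha : w.get i = a := congrArg (fun t => t.2.1) heq
    have hs : qs' i.succ = Sum.inr (qq, mm, ii) := congrArg (fun t => t.2.2) heq
    have e1 : (und ∘ qs') i.castSucc = und x := by rw [Function.comp_apply, hx]
    have e2 : (und ∘ qs') i.succ = qq := by rw [Function.comp_apply, hs]; rfl
    rw [e1, e2, ha]
    exact hT'

lemma g_liftp (Val : List M → M) (qs : Fin (w.length + 1) → Q) (d : Fin w.length → M × ℕ) :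
    mval Val (List.ofFn fun i => unfγ (A := A)
        (liftp qs d i.castSucc, w.get i, liftp qs d i.succ)) =
      Finsupp.single (Val (List.ofFn fun i => (d i).1)) 1 := by
  have : ∀ i : Fin w.length,
      unfγ (A := A) (liftp qs d i.castSucc, w.get i, liftp qs d i.succ) =
        Finsupp.single (d i).1 1 := by
    intro i
    rw [liftp_succ]
    rfl
  simp only [this]
  exact mval_singles Val _

end Automaton

section Main

variable {Q A M : Type*} (I F : Set Q) (T : Set (Q × A × Q)) (γ : Q × A × Q → (M →₀ ℕ))
  {w : List A}

lemma fiber_sum (Val : List M → M) (hw : w ≠ []) {qs : Fin (w.length + 1) → Q}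
    (hqs : qs ∈ accSet I F T w) :
    ∑ᶠ qs' ∈ {qs' : Fin (w.length + 1) → Q ⊕ (Q × M × ℕ) |
        qs' ∈ accSet (unfI I) (unfF F) (unfT T γ) w ∧ und ∘ qs' = qs},
      mval Val (List.ofFn fun i => unfγ (A := A) (qs' i.castSucc, w.get i, qs' i.succ)) =
    mval Val (List.ofFn fun i => γ (qs i.castSucc, w.get i, qs i.succ)) := by
  set r : Fin w.length → (M →₀ ℕ) := fun i => γ (qs i.castSucc, w.get i, qs i.succ) with hr
  set C : Set (Fin w.length → M × ℕ) := {d | ∀ i, d i ∈ Dset (r i)} with hC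
  have hbij2 : Set.BijOn (liftp qs)
      C {qs' : Fin (w.length + 1) → Q ⊕ (Q × M × ℕ) |
        qs' ∈ accSet (unfI I) (unfF F) (unfT T γ) w ∧ und ∘ qs' = qs} := by
    refine ⟨fun d hd => (mem_fiber_iff I F T γ hw hqs _).2 ⟨d, hd, rfl⟩,
      fun d1 _ d2 _ h => funext fun i => ?_, fun qs' hqs' => ?_⟩
    · have := congrFun h i.succ
      simpa [Prod.ext_iff] using this
    · obtain ⟨d, hd, rfl⟩ := (mem_fiber_iff I F T γ hw hqs _).1 hqs'
      exact ⟨d, hd, rfl⟩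
  have hbij1 : Set.BijOn (fun d : Fin w.length → M × ℕ => List.ofFn d)
      C ↑(choices (List.ofFn r)) := by
    refine ⟨fun d hd => ?_, fun d1 _ d2 _ h => List.ofFn_injective h, fun c hc => ?_⟩
    · rw [Finset.mem_coe, mem_choices_ofFn]; exact ⟨d, rfl, hd⟩
    · obtain ⟨d, rfl, hd⟩ := (mem_choices_ofFn r c).1 hc
      exact ⟨d, hd, rfl⟩
  calc ∑ᶠ qs' ∈ {qs' : Fin (w.length + 1) → Q ⊕ (Q × M × ℕ) |
        qs' ∈ accSet (unfI I) (unfF F) (unfT T γ) w ∧ und ∘ qs' = qs},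
      mval Val (List.ofFn fun i => unfγ (A := A) (qs' i.castSucc, w.get i, qs' i.succ))
      = ∑ᶠ d ∈ C, Finsupp.single (Val (List.ofFn fun i => (d i).1)) 1 :=
        (finsum_mem_eq_of_bijOn (liftp qs) hbij2 fun d _ => (g_liftp Val qs d).symm).symm
    _ = ∑ᶠ c ∈ ↑(choices (List.ofFn r)), Finsupp.single (Val (c.map Prod.fst)) 1 := by
        refine finsum_mem_eq_of_bijOn _ hbij1 fun d _ => ?_
        rw [List.map_ofFn]; rfl
    _ = ∑ c ∈ choices (List.ofFn r), Finsupp.single (Val (c.map Prod.fst)) 1 :=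
        finsum_mem_coe_finset _ _
    _ = mval Val (List.ofFn r) := (mapDomain_listProd _ _).symm

lemma fiber_finite (hw : w ≠ []) {qs : Fin (w.length + 1) → Q} (hqs : qs ∈ accSet I F T w) :
    {qs' : Fin (w.length + 1) → Q ⊕ (Q × M × ℕ) |
      qs' ∈ accSet (unfI I) (unfF F) (unfT T γ) w ∧ und ∘ qs' = qs}.Finite := by
  have hC : ({d : Fin w.length → M × ℕ |
      ∀ i, d i ∈ Dset (γ (qs i.castSucc, w.get i, qs i.succ))}).Finite := by
    have := Set.Finite.pi (t := fun i : Fin w.length =>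
      (↑(Dset (γ (qs i.castSucc, w.get i, qs i.succ))) : Set (M × ℕ)))
      (fun i => (Dset _).finite_toSet)
    refine this.subset fun d hd => ?_
    simp only [Set.mem_pi, Set.mem_univ, forall_true_left, Finset.mem_coe]
    intro i
    exact hd i
  refine (hC.image (liftp qs)).subset fun qs' hqs' => ?_
  obtain ⟨d, hd, rfl⟩ := (mem_fiber_iff I F T γ hw hqs _).1 hqs'
  exact ⟨d, hd, rfl⟩

lemma sum_single_ne_zero {β α : Type*} {s : Finset β} (v : β → α) {c₀ : β} (hc : c₀ ∈ s) :
    (∑ c ∈ s, Finsupp.single (v c) (1 : ℕ)) ≠ 0 := by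
  intro h
  have h1 : (∑ c ∈ s, Finsupp.single (v c) (1 : ℕ)) (v c₀) = 0 := by rw [h]; rfl
  rw [Finsupp.finset_sum_apply] at h1
  have h2 : (Finsupp.single (v c₀) (1 : ℕ)) (v c₀) ≤
      ∑ c ∈ s, (Finsupp.single (v c) (1 : ℕ)) (v c₀) :=
    Finset.single_le_sum (f := fun c => (Finsupp.single (v c) (1 : ℕ)) (v c₀)) (fun c _ => Nat.zero_le _) hc
  rw [Finsupp.single_eq_same] at h2
  omega

/-- Abstract gluing lemma for summing over fibers. -/
lemma glue {α β N : Type*} [AddCommMonoid N] (S : Set α) (S' : Set β) (h : β → α)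
    (f : α → N) (g : β → N)
    (hproj : ∀ b ∈ S', h b ∈ S)
    (hkey : ∀ a ∈ S, ∑ᶠ b ∈ {b | b ∈ S' ∧ h b = a}, g b = f a)
    (hfin : ∀ a ∈ S, {b | b ∈ S' ∧ h b = a}.Finite)
    (hne : ∀ b ∈ S', g b ≠ 0)
    (hne2 : ∀ a ∈ S, f a ≠ 0 → {b | b ∈ S' ∧ h b = a}.Nonempty)
    (hne3 : ∀ b ∈ S', f (h b) ≠ 0) :
    ∑ᶠ b ∈ S', g b = ∑ᶠ a ∈ S, f a := by
  have hcover : S' = ⋃ a ∈ S ∩ Function.support f, {b | b ∈ S' ∧ h b = a} := by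
    ext b
    simp only [Set.mem_iUnion, Set.mem_setOf_eq]
    constructor
    · intro hb; exact ⟨h b, ⟨hproj b hb, hne3 b hb⟩, hb, rfl⟩
    · rintro ⟨a, -, hb, -⟩; exact hb
  rw [← finsum_mem_inter_support f S]
  rcases Set.finite_or_infinite (S ∩ Function.support f) with hfin' | hinf
  · rw [hcover, finsum_mem_biUnion ?_ hfin' (fun a ha => hfin a ha.1)]
    · exact finsum_mem_congr rfl fun a ha => hkey a ha.1
    · intro a1 h1 a2 h2 hne'
      rw [Function.onFun, Set.disjoint_left]
      rintro b ⟨-, rfl⟩ ⟨-, e⟩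
      exact hne' e
  · rw [finsum_mem_eq_zero_of_infinite, finsum_mem_eq_zero_of_infinite]
    · rwa [Set.inter_assoc, Set.inter_self]
    · have hS' : S' ∩ Function.support g = S' :=
        Set.inter_eq_self_of_subset_left fun b hb => hne b hb
      rw [hS']
      have himg : S ∩ Function.support f ⊆ h '' S' := fun a ha => by
        obtain ⟨b, hb1, hb2⟩ := hne2 a ha.1 ha.2
        exact ⟨b, hb1, hb2⟩
      exact Set.Infinite.of_image h (hinf.mono himg)

end Main

/-- Unfolding a weighted automaton over `ℕ⟨M⟩` into one whose weights are simple
multisets preserves the behavior: for every word `w ∈ Σ⁺`, the sum over accepting paths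
of the multiset valuations of the path weights agree. -/
theorem unfolding_behavior {Q A M : Type*} (Val : List M → M)
    (I F : Set Q) (T : Set (Q × A × Q)) (γ : Q × A × Q → (M →₀ ℕ))
    (w : List A) (hw : w ≠ []) :
    wBehavior Val (unfI I) (unfF F) (unfT T γ) (unfγ (Q := Q) (A := A) (M := M)) w =
      wBehavior Val I F T γ w := by
  rw [wBehavior, wBehavior]
  refine glue (accSet I F T w) (accSet (unfI I) (unfF F) (unfT T γ) w)
    (fun qs' => und ∘ qs')
    (fun qs => mval Val (List.ofFn fun i => γ (qs i.castSucc, w.get i, qs i.succ)))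
    (fun qs' => mval Val (List.ofFn fun i => unfγ (qs' i.castSucc, w.get i, qs' i.succ)))
    (fun b hb => proj_acc I F T γ hb)
    (fun a ha => fiber_sum I F T γ Val hw ha)
    (fun a ha => fiber_finite I F T γ hw ha)
    (fun b hb => ?_) (fun a ha hfa => ?_) (fun b hb => ?_)
  · -- g nonzero on S'
    obtain ⟨d, hd, hbe⟩ := (mem_fiber_iff I F T γ hw (proj_acc I F T γ hb) b).1 ⟨hb, rfl⟩
    show mval Val (List.ofFn fun i => unfγ (b i.castSucc, w.get i, b i.succ)) ≠ 0
    rw [hbe, g_liftp]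
    simp [Finsupp.single_eq_zero]
  · -- fiber nonempty when f a ≠ 0
    replace hfa : mval Val (List.ofFn fun i => γ (a i.castSucc, w.get i, a i.succ)) ≠ 0 := hfa
    rw [mval, mapDomain_listProd] at hfa
    rcases Finset.eq_empty_or_nonempty
        (choices (List.ofFn fun i => γ (a i.castSucc, w.get i, a i.succ))) with he | ⟨c, hc⟩
    · rw [he, Finset.sum_empty] at hfa; exact absurd rfl hfa
    · obtain ⟨d, rfl, hd⟩ := (mem_choices_ofFn _ c).1 hc
      exact ⟨liftp a d, (mem_fiber_iff I F T γ hw ha _).2 ⟨d, hd, rfl⟩⟩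
  · -- f nonzero at projections of S'
    obtain ⟨d, hd, hbe⟩ := (mem_fiber_iff I F T γ hw (proj_acc I F T γ hb) b).1 ⟨hb, rfl⟩
    show mval Val (List.ofFn fun i =>
      γ ((und ∘ b) i.castSucc, w.get i, (und ∘ b) i.succ)) ≠ 0
    rw [mval, mapDomain_listProd]
    exact sum_single_ne_zero _ ((mem_choices_ofFn _ _).2 ⟨d, rfl, hd⟩)
end

section
/- Let 𝒜 = (Q, I, T, F, γ) be a multi-weighted automaton over Σ and valuation structure (M, Val, Φ), and let 𝒜′ = (Q, I, T, F, γ′) be the weighted automaton over the pv-monoid ℕ⟨M⟩ with γ′(t) = [γ(t)] for all t ∈ T. Then for all w ∈ Σ⁺, the ℕ⟨M⟩-behavior of 𝒜′ on w equals the multiset |𝒜|(w) of path weights of 𝒜 on w. -/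
/-- The weight of a path of a multi-weighted automaton. -/
def pathWeight {Q A M : Type*} (Val : List M → M) (γ : Q × A × Q → M) (w : List A)
    (qs : Fin (w.length + 1) → Q) : M :=
  Val (List.ofFn fun i : Fin w.length => γ (qs i.castSucc, w.get i, qs i.succ))

/-- The multiset `|𝒜|(w)` of weights of accepting paths of a multi-weighted automaton:
the union over accepting paths of the simple multiset on the path weight. -/
noncomputable def msBehavior {Q A M : Type*} (Val : List M → M) (I F : Set Q)
    (T : Set (Q × A × Q)) (γ : Q × A × Q → M) (w : List A) : M →₀ ℕ :=
  ∑ᶠ qs ∈ accSet I F T w, Finsupp.single (pathWeight Val γ w qs) 1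

theorem listProd_map_single {M : Type*} (ms : List M) :
    listProd (ms.map fun m => Finsupp.single m 1) = Finsupp.single ms 1 := by
  induction ms with
  | nil => rfl
  | cons m ms ih =>
    simp only [List.map_cons, listProd, ih]
    rw [Finsupp.sum_single_index, Finsupp.sum_single_index] <;> simp

theorem mval_ofFn_single {M : Type*} (Val : List M → M) {n : ℕ} (f : Fin n → M) :
    mval Val (List.ofFn fun i => Finsupp.single (f i) 1) =
      Finsupp.single (Val (List.ofFn f)) 1 := by
  rw [mval, List.ofFn_comp' f fun m => Finsupp.single m 1, listProd_map_single,
    Finsupp.mapDomain_single]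

theorem single_weights_behavior_general {Q A M : Type*}
    (Val : List M → M) (I F : Set Q) (T : Set (Q × A × Q)) (γ : Q × A × Q → M)
    (w : List A) :
    wBehavior Val I F T (fun t => Finsupp.single (γ t) 1) w =
      msBehavior Val I F T γ w :=
  finsum_mem_congr rfl fun _ _ => mval_ofFn_single Val _

/-- Let `𝒜 = (Q, I, T, F, γ)` be a multi-weighted automaton and `𝒜′ = (Q, I, T, F, γ′)`
the weighted automaton over the pv-monoid `ℕ⟨M⟩` with `γ′(t) = [γ(t)]`. Then for all
`w ∈ Σ⁺`, the `ℕ⟨M⟩`-behavior of `𝒜′` on `w` equals the multiset `|𝒜|(w)`. -/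
theorem single_weights_behavior {Q A M : Type*} [Fintype Q]
    (Val : List M → M) (I F : Set Q) (T : Set (Q × A × Q)) (γ : Q × A × Q → M)
    (w : List A) (hw : w ≠ []) :
    wBehavior Val I F T (fun t => Finsupp.single (γ t) 1) w =
      msBehavior Val I F T γ w :=
  single_weights_behavior_general Val I F T γ w
end
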